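/- arXiv:1111.4520 — 7 statements merged into one kernel-verified Lean document; each statement's English description precedes it below -/
import Mathlib

section
/- For any integer n > 1 and any prime p, the p-adic valuation of the greatest common divisor of the binomial coefficients C(n, k) for 0 < k < n equals 1 if n is a power of p (n = p^i for some i ≥ 0 with n > 1), and equals 0 otherwise. -/
/-!
By Lucas' theorem the gcd of the inner binomial coefficients of `n` is the prime `q` when
`n = q ^ k` with `k ≥ 1`, and `1` when `n` is not a prime power; its `p`-adic valuation is
therefore `1` exactly when `n` is a power of `p`.
-/

open Nat

lemma Finset.Ioo_zero_eq_Icc_one_sub_one (n : ℕ) : Finset.Ioo 0 n = Finset.Icc 1 (n - 1) := by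
  ext k
  simp only [Finset.mem_Ioo, Finset.mem_Icc]
  omega

lemma Nat.exponent_ne_zero_of_one_lt_pow {p i : ℕ} (h : 1 < p ^ i) : i ≠ 0 := by
  rintro rfl
  simp at h

lemma IsPrimePow.minFac_eq_iff {n p : ℕ} (hn : IsPrimePow n) (hp : p.Prime) :
    n.minFac = p ↔ ∃ i, n = p ^ i := by
  constructor
  · rintro rfl
    exact ⟨_, hn.minFac_pow_factorization_eq.symm⟩
  · rintro ⟨i, rfl⟩
    exact hp.pow_minFac (exponent_ne_zero_of_one_lt_pow hn.one_lt)

open Classical in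
theorem stmt_1 (n p : ℕ) (hn : 1 < n) (hp : p.Prime) :
    padicValNat p ((Finset.Ioo 0 n).gcd (fun k => n.choose k)) =
      if ∃ i : ℕ, n = p ^ i then 1 else 0 := by
  have : Fact p.Prime := ⟨hp⟩
  rw [Finset.Ioo_zero_eq_Icc_one_sub_one]
  by_cases hpow : IsPrimePow n
  · rw [Choose.gcd_choose_eq_minFac_of_isPrimePow hpow, ← hpow.minFac_eq_iff hp]
    split_ifs with hmin
    · rw [hmin, padicValNat_self]
    · exact padicValNat.eq_zero_of_not_dvd fun hdvd =>
        hmin ((prime_dvd_prime_iff_eq hp (minFac_prime hpow.ne_one)).1 hdvd).symm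
  · have hnpow : ¬∃ i, n = p ^ i := by
      rintro ⟨i, hi⟩
      exact hpow (hi ▸ hp.isPrimePow.pow (exponent_ne_zero_of_one_lt_pow (hi ▸ hn)))
    rw [Choose.gcd_choose_eq_one_of_not_isPrimePow hn hpow, if_neg hnpow, padicValNat_one_right]
end

section
/- For any integer n > 1 and any odd prime p, the p-adic valuation of the greatest common divisor of the binomial coefficients C(2n, 2k) for 0 < k < n equals 1 if 2n = p^i + p^j for some integers 0 ≤ i ≤ j, and equals 0 otherwise. -/
/-!
By Kummer's theorem, `(p - 1) * v_p (C(N, a)) = s(a) + s(N - a) - s(N)`, where `s` is the base-`p`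
digit sum. As `p` is odd, `s(x) ≡ x [MOD 2]`, so every even `x > 0` has `s(x) ≥ 2`.

If `2n = p^i + p^j` then `s(2n) = 2`, so `p` divides every `C(2n, 2k)`, and
`2k = (p - 1) p^(j-1)` (digit sum `p - 1`, with `2n - 2k = p^i + p^(j-1)`) gives valuation exactly `1`.
Otherwise let `p^j` be the leading power of `2n` and `p^u` the leading power of `2n - p^j`;
then `a = p^j + p^u` is even, `a < 2n`, and `s(a) + s(2n - a) = s(2n)`, so `p ∤ C(2n, a)`.
-/

namespace Nat

theorem digits_sum_add_base_pow_mul {b j x : ℕ} (hb : 1 < b) (hx : x < b ^ j) (y : ℕ) :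
    (b.digits (x + b ^ j * y)).sum = (b.digits x).sum + (b.digits y).sum := by
  rcases Nat.eq_zero_or_pos y with rfl | hy
  · simp
  have hlen := (digits_length_le_iff hb x).2 hx
  rw [← Nat.add_sub_cancel' hlen, ← digits_append_zeroes_append_digits hb hy]
  simp

theorem digits_sum_of_lt {b c : ℕ} (hc : c < b) : (b.digits c).sum = c := by
  rcases Nat.eq_zero_or_pos c with rfl | hc0
  · simp
  · simp [digits_of_lt b c hc0.ne' hc]

theorem digits_sum_base_pow {b : ℕ} (hb : 1 < b) (u : ℕ) : (b.digits (b ^ u)).sum = 1 := by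
  simpa [digits_sum_of_lt hb] using digits_sum_add_base_pow_mul hb (pow_pos (by omega) u) 1

theorem digits_sum_base_pow_add_base_pow {b : ℕ} (hb : 2 < b) (u v : ℕ) :
    (b.digits (b ^ u + b ^ v)).sum = 2 := by
  wlog huv : u ≤ v generalizing u v
  · rw [add_comm]; exact this v u (by omega)
  rcases huv.lt_or_eq with huv | rfl
  · simpa [digits_sum_base_pow (b := b) (by omega), digits_sum_of_lt (show 1 < b by omega)]
      using digits_sum_add_base_pow_mul (b := b) (by omega) (Nat.pow_lt_pow_right (by omega) huv) 1
  · simpa [← two_mul, mul_comm, digits_sum_of_lt hb]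
      using digits_sum_add_base_pow_mul (b := b) (by omega) (pow_pos (by omega) u) 2

theorem digits_sum_pos {b x : ℕ} (hx : x ≠ 0) : 0 < (b.digits x).sum :=
  (Nat.pos_of_ne_zero (getLast_digit_ne_zero b hx)).trans_le
    (List.le_sum_of_mem (List.getLast_mem _))

theorem digits_sum_sub_base_pow_log {b r : ℕ} (hb : 1 < b) (hr : r ≠ 0) :
    (b.digits r).sum = (b.digits (r - b ^ b.log r)).sum + 1 := by
  set u := b.log r
  have hpu : 0 < b ^ u := pow_pos (by omega) u
  have hd : r / b ^ u < b := by
    rw [Nat.div_lt_iff_lt_mul hpu, ← pow_succ']; exact lt_pow_succ_log_self hb r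
  have hd0 : 1 ≤ r / b ^ u := (Nat.le_div_iff_mul_le hpu).2 (by simpa using pow_log_le_self b hr)
  have hsplit : ∀ c, c ≤ r / b ^ u →
      (b.digits (r - b ^ u * c)).sum = (b.digits (r % b ^ u)).sum + (r / b ^ u - c) := by
    intro c hc
    have : r - b ^ u * c = r % b ^ u + b ^ u * (r / b ^ u - c) := by
      conv_lhs => rw [← Nat.mod_add_div r (b ^ u)]
      rw [Nat.mul_sub, Nat.add_sub_assoc (Nat.mul_le_mul_left _ hc)]
    rw [this, digits_sum_add_base_pow_mul hb (Nat.mod_lt _ hpu),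
      digits_sum_of_lt (c := r / b ^ u - c) (by omega)]
  have h0 := hsplit 0 (by omega)
  have h1 := hsplit 1 hd0
  simp only [mul_zero, Nat.sub_zero, mul_one] at h0 h1
  omega

theorem two_le_digits_sum_of_even {b x : ℕ} (hb : Odd b) (hx : x ≠ 0) (hev : Even x) :
    2 ≤ (b.digits x).sum := by
  have hmod : x ≡ (b.digits x).sum [MOD 2] := modEq_digits_sum 2 b (Nat.odd_iff.1 hb) x
  have := digits_sum_pos (b := b) hx
  have := Nat.even_iff.1 hev
  unfold Nat.ModEq at hmod
  omega

theorem exists_even_digits_sum_add_eq {p N : ℕ} (hp : 1 < p) (hodd : Odd p) (hN0 : N ≠ 0)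
    (hN : Even N) (h : ∀ i j, i ≤ j → N ≠ p ^ i + p ^ j) :
    ∃ a, a ≠ 0 ∧ a < N ∧ Even a ∧
      (p.digits a).sum + (p.digits (N - a)).sum = (p.digits N).sum := by
  set j := p.log N
  set M := N - p ^ j
  have hpjN : p ^ j ≤ N := pow_log_le_self p hN0
  have hM0 : M ≠ 0 := fun hM =>
    Nat.not_even_iff_odd.2 (hodd.pow (n := j)) (by rwa [show N = p ^ j by omega] at hN)
  set u := p.log M
  have hpuM : p ^ u ≤ M := pow_log_le_self p hM0
  have hMpu : M ≠ p ^ u := fun hM => h u j (log_mono_right (by omega)) (by omega)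
  refine ⟨p ^ j + p ^ u, by positivity, by omega, hodd.pow.add_odd hodd.pow, ?_⟩
  have hsN : (p.digits N).sum = (p.digits M).sum + 1 := digits_sum_sub_base_pow_log hp hN0
  have hsM : (p.digits M).sum = (p.digits (M - p ^ u)).sum + 1 :=
    digits_sum_sub_base_pow_log hp hM0
  rw [digits_sum_base_pow_add_base_pow (by rcases hodd with ⟨m, rfl⟩; omega),
    show N - (p ^ j + p ^ u) = M - p ^ u by omega]
  omega

end Nat

theorem padicValNat_finset_gcd_eq {ι : Type*} {p m : ℕ} (hp : p ≠ 1) {s : Finset ι}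
    {f : ι → ℕ} (hf : ∀ i ∈ s, f i ≠ 0) (hle : ∀ i ∈ s, m ≤ padicValNat p (f i)) {i₀ : ι}
    (hi₀ : i₀ ∈ s) (hi₀m : padicValNat p (f i₀) = m) : padicValNat p (s.gcd f) = m := by
  have hg : s.gcd f ≠ 0 := fun h => hf i₀ hi₀ (Finset.gcd_eq_zero_iff.1 h i₀ hi₀)
  apply le_antisymm
  · rw [← hi₀m, ← padicValNat_dvd_iff_le_of_ne_one hp (hf i₀ hi₀)]
    exact pow_padicValNat_dvd.trans (Finset.gcd_dvd hi₀)
  · rw [← padicValNat_dvd_iff_le_of_ne_one hp hg]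
    exact Finset.dvd_gcd fun i hi => (padicValNat_dvd_iff_le_of_ne_one hp (hf i hi)).2 (hle i hi)

section choose

variable {p n k : ℕ} [Fact p.Prime]

theorem padicValNat_choose_eq_zero_of_digits_sum_add_eq (hkn : k ≤ n)
    (h : (p.digits k).sum + (p.digits (n - k)).sum = (p.digits n).sum) :
    padicValNat p (n.choose k) = 0 := by
  have := sub_one_mul_padicValNat_choose_eq_sub_sum_digits (p := p) hkn
  rw [h, Nat.sub_self, Nat.mul_eq_zero] at this
  exact this.resolve_left (Nat.sub_ne_zero_of_lt (Fact.out : p.Prime).one_lt)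

theorem one_le_padicValNat_choose_of_digits_sum_eq_two (hodd : Odd p)
    (hn : (p.digits n).sum = 2) (hk0 : k ≠ 0) (hkn : k < n) (hk : Even k) (hnk : Even n) :
    1 ≤ padicValNat p (n.choose k) := by
  have hkum := sub_one_mul_padicValNat_choose_eq_sub_sum_digits (p := p) hkn.le
  have := Nat.two_le_digits_sum_of_even hodd hk0 hk
  have := Nat.two_le_digits_sum_of_even hodd (x := n - k) (by omega) (hnk.tsub hk)
  rw [Nat.one_le_iff_ne_zero]
  intro h0
  rw [h0, hn] at hkum
  omega

theorem padicValNat_choose_pow_add_pow_sub_one_mul (hp : 2 < p) (i j : ℕ) :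
    padicValNat p ((p ^ i + p ^ (j + 1)).choose ((p - 1) * p ^ j)) = 1 := by
  have hle : (p - 1) * p ^ j ≤ p ^ (j + 1) := by
    rw [pow_succ']; exact Nat.mul_le_mul_right _ (Nat.sub_le p 1)
  have hkum := sub_one_mul_padicValNat_choose_eq_sub_sum_digits (p := p)
    (hle.trans (Nat.le_add_left _ (p ^ i)))
  have hsub : p ^ i + p ^ (j + 1) - (p - 1) * p ^ j = p ^ i + p ^ j := by
    rw [pow_succ', Nat.sub_mul, one_mul]
    have := Nat.le_mul_of_pos_left (p ^ j) (by omega : 0 < p)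
    omega
  have hs : (p.digits ((p - 1) * p ^ j)).sum = p - 1 := by
    simpa [mul_comm, Nat.digits_sum_of_lt (show p - 1 < p by omega)] using
      Nat.digits_sum_add_base_pow_mul (b := p) (x := 0) (by omega) (by positivity) (p - 1)
  rw [hsub, hs, Nat.digits_sum_base_pow_add_base_pow hp, Nat.digits_sum_base_pow_add_base_pow hp,
    Nat.add_sub_cancel] at hkum
  exact Nat.eq_of_mul_eq_mul_left (by omega) (hkum.trans (mul_one _).symm)

end choose

open Classical in
theorem stmt_2 (n p : ℕ) (hn : 1 < n) (hp : p.Prime) (hodd : Odd p) :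
    padicValNat p ((Finset.Ioo 0 n).gcd (fun k => (2 * n).choose (2 * k))) =
      if ∃ i j : ℕ, i ≤ j ∧ 2 * n = p ^ i + p ^ j then 1 else 0 := by
  have := Fact.mk hp
  have hp2 : 2 < p := hp.two_le.lt_of_ne (by rintro rfl; exact absurd hodd (by decide))
  have hchoose : ∀ k ∈ Finset.Ioo 0 n, (2 * n).choose (2 * k) ≠ 0 := fun k hk =>
    (Nat.choose_pos (by rw [Finset.mem_Ioo] at hk; omega)).ne'
  split_ifs with h
  · obtain ⟨i, j, hij, hN⟩ := h
    obtain ⟨j, rfl⟩ : ∃ j', j = j' + 1 := Nat.exists_eq_add_one.2 (by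
      by_contra! hj; simp [show j = 0 by omega, show i = 0 by omega] at hN; omega)
    have hk₀ : 2 * (p / 2 * p ^ j) = (p - 1) * p ^ j := by
      rw [← mul_assoc, show 2 * (p / 2) = p - 1 by have := Nat.odd_iff.1 hodd; omega]
    have hk₀n : (p - 1) * p ^ j < 2 * n := by
      rw [hN, pow_succ']
      exact Nat.lt_add_left _ (Nat.mul_lt_mul_of_pos_right (by omega) (by positivity))
    refine padicValNat_finset_gcd_eq hp.ne_one hchoose (fun k hk => ?_) (i₀ := p / 2 * p ^ j)
      (Finset.mem_Ioo.2 ⟨Nat.mul_pos (by omega) (by positivity), by omega⟩)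
      (by rw [hk₀, hN]; exact padicValNat_choose_pow_add_pow_sub_one_mul hp2 i j)
    rw [Finset.mem_Ioo] at hk
    exact one_le_padicValNat_choose_of_digits_sum_eq_two hodd
      (by rw [hN]; exact Nat.digits_sum_base_pow_add_base_pow hp2 i (j + 1))
      (by omega) (by omega) (even_two_mul k) (even_two_mul n)
  · push Not at h
    obtain ⟨a, ha0, haN, ⟨k, rfl⟩, hsum⟩ := Nat.exists_even_digits_sum_add_eq hp.one_lt hodd
      (by omega) (even_two_mul n) h
    refine padicValNat_finset_gcd_eq hp.ne_one hchoose (fun _ _ => Nat.zero_le _) (i₀ := k)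
      (by rw [Finset.mem_Ioo]; omega) ?_
    rw [← two_mul] at hsum
    exact padicValNat_choose_eq_zero_of_digits_sum_add_eq (by omega) hsum
end

section
/- Let p be an odd prime, i > 0, and l an integer with 1 < l < p. Then C(l·p^i − 1, p^i + 1) ≡ 1 − l (mod p). -/
/-!
In base `p ^ i`, `l * p ^ i - 1` has digits `(l - 1, p ^ i - 1)` and `p ^ i + 1` has digits
`(1, 1)`. Lucas's theorem holds in base `p ^ i` (group the base-`p` digits in blocks of `i`), so
the binomial coefficient is `(l - 1) * (p ^ i - 1) ≡ (l - 1) * (-1)` modulo `p`.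
-/

open Nat Finset

theorem Nat.add_pow_mul_div_pow_mod_of_lt {p r i : ℕ} (hri : r < i) (b a : ℕ) :
    (b + p ^ i * a) / p ^ r % p = b / p ^ r % p := by
  obtain ⟨s, rfl⟩ := Nat.exists_eq_add_of_lt hri
  rcases p.eq_zero_or_pos with rfl | hp
  · simp
  rw [show p ^ (r + s + 1) * a = p ^ r * (p * (p ^ s * a)) by ring,
    Nat.add_mul_div_left _ _ (pow_pos hp r), Nat.add_mul_mod_self_left]

namespace Choose

theorem choose_add_pow_mul_modEq_choose_mul_choose {p i a b c d : ℕ} [Fact p.Prime]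
    (hb : b < p ^ i) (hd : d < p ^ i) :
    choose (b + p ^ i * a) (d + p ^ i * c) ≡ choose b d * choose a c [ZMOD p] := by
  have hpi : 0 < p ^ i := pow_pos (NeZero.pos p) i
  grw [choose_modEq_choose_mul_prod_range_choose i, mul_comm, lucas_theorem hb hd]
  rw [Nat.add_mul_div_left _ _ hpi, Nat.add_mul_div_left _ _ hpi, Nat.div_eq_of_lt hb,
    Nat.div_eq_of_lt hd, zero_add, zero_add, Nat.cast_prod]
  rw [prod_congr rfl fun r hr => by
    rw [add_pow_mul_div_pow_mod_of_lt (mem_range.mp hr),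
      add_pow_mul_div_pow_mod_of_lt (mem_range.mp hr)]]

end Choose

theorem stmt_7_general (p i l : ℕ) (hp : p.Prime) (hi : 0 < i) (hl : 1 < l) :
    (((l * p ^ i - 1).choose (p ^ i + 1) : ℤ)) ≡ 1 - (l : ℤ) [ZMOD (p : ℤ)] := by
  have : Fact p.Prime := ⟨hp⟩
  have hpi : 1 < p ^ i := Nat.one_lt_pow hi.ne' hp.one_lt
  have hn : l * p ^ i - 1 = (p ^ i - 1) + p ^ i * (l - 1) := by
    have : p ^ i ≤ p ^ i * l := Nat.le_mul_of_pos_right _ (by omega)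
    rw [Nat.mul_sub_one, mul_comm l]
    omega
  rw [hn, show p ^ i + 1 = 1 + p ^ i * 1 by ring]
  grw [Choose.choose_add_pow_mul_modEq_choose_mul_choose (by omega) hpi]
  simp only [Nat.choose_one_right]
  push_cast [hl.le, hpi.le]
  have hpow : (p : ℤ) ^ i ≡ 0 [ZMOD p] :=
    Int.modEq_zero_iff_dvd.mpr (dvd_pow_self _ hi.ne')
  calc ((p : ℤ) ^ i - 1) * (l - 1) ≡ (0 - 1) * (l - 1) [ZMOD p] := by gcongr
    _ = 1 - l := by ring

theorem stmt_7 (p i l : ℕ) (hp : p.Prime) (hodd : Odd p) (hi : 0 < i)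
    (hl : 1 < l) (hl' : l < p) :
    (((l * p ^ i - 1).choose (p ^ i + 1) : ℤ)) ≡ 1 - (l : ℤ) [ZMOD (p : ℤ)] :=
  stmt_7_general p i l hp hi hl
end

section
/- For every prime p > 3 and every integer i ≥ 2, the binomial coefficient C(p^i − 1, p^{i−1} + p^{i−2}) is congruent to 1 − p modulo p². -/
/-!
Write `C(pN - 1, k) = ∏_{j ≤ k} (pN - j) / j`. When `p ∣ N` we have `p² ∣ pN`, so every factor with
`p ∤ j` is `≡ -1 (mod p²)`, while the factors with `j = pm` are `(N - m) / m`, whose product is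
`C(N - 1, ⌊k/p⌋)`. Hence `C(pN - 1, k) ≡ (-1)^(k - ⌊k/p⌋) C(N - 1, ⌊k/p⌋) (mod p²)`; for `k = pm`
and odd `p` the sign is `+1`. Taking `N = p^(i-1)` and `k = p^(i-1) + p^(i-2)` reduces `i` to
`i - 1`, down to `C(p² - 1, p + 1) ≡ -C(p - 1, 1) = 1 - p`.
-/

open Finset

/-- `∏_{1 ≤ j ≤ k, p ∤ j} f j` -/
def prodNonMultiples (p : ℕ) (f : ℕ → ℕ) (k : ℕ) : ℕ :=
  ∏ j ∈ range k, if p ∣ j + 1 then 1 else f (j + 1)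

section prodNonMultiples

variable {p : ℕ} (f : ℕ → ℕ) {k : ℕ}

@[simp]
lemma prodNonMultiples_zero : prodNonMultiples p f 0 = 1 := prod_range_zero _

lemma prodNonMultiples_succ_of_dvd (h : p ∣ k + 1) :
    prodNonMultiples p f (k + 1) = prodNonMultiples p f k := by
  rw [prodNonMultiples, prod_range_succ, if_pos h, mul_one, prodNonMultiples]

lemma prodNonMultiples_succ_of_not_dvd (h : ¬ p ∣ k + 1) :
    prodNonMultiples p f (k + 1) = prodNonMultiples p f k * f (k + 1) := by
  rw [prodNonMultiples, prod_range_succ, if_neg h, prodNonMultiples]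

lemma cast_prodNonMultiples_sub {R : Type*} [CommRing R] {n : ℕ} (hn : (n : R) = 0)
    (hk : k ≤ n) :
    (prodNonMultiples p (fun j => n - j) k : R) = (-1) ^ (k - k / p) * prodNonMultiples p id k := by
  induction k with
  | zero => simp
  | succ k ih =>
    by_cases h : p ∣ k + 1
    · have : k + 1 - (k + 1) / p = k - k / p := by
        rw [Nat.succ_div, if_pos h]; have := Nat.div_le_self k p; omega
      rw [prodNonMultiples_succ_of_dvd _ h, prodNonMultiples_succ_of_dvd _ h, this, ih (by omega)]
    · have : k + 1 - (k + 1) / p = k - k / p + 1 := by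
        rw [Nat.succ_div, if_neg h]; have := Nat.div_le_self k p; omega
      rw [prodNonMultiples_succ_of_not_dvd _ h, prodNonMultiples_succ_of_not_dvd _ h, this,
        Nat.cast_mul, Nat.cast_mul, ih (by omega), Nat.cast_sub hk, hn]
      simp only [id, Nat.cast_add, Nat.cast_one]
      ring

end prodNonMultiples

lemma choose_succ_mul_of_succ_eq_mul {p N k m : ℕ} (hp : 0 < p) (hk : k + 1 = p * m) :
    (p * N - 1).choose (k + 1) * m = (p * N - 1).choose k * (N - m) := by
  have hsub : p * N - 1 - k = p * (N - m) := by rw [Nat.mul_sub]; omega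
  apply Nat.eq_of_mul_eq_mul_left hp
  calc p * ((p * N - 1).choose (k + 1) * m) = (p * N - 1).choose (k + 1) * (k + 1) := by
        rw [hk]; ring
    _ = (p * N - 1).choose k * (p * (N - m)) := by rw [Nat.choose_succ_right_eq, hsub]
    _ = p * ((p * N - 1).choose k * (N - m)) := by ring

lemma choose_mul_sub_one_mul_prodNonMultiples {p : ℕ} (hp : 0 < p) (N k : ℕ) :
    (p * N - 1).choose k * prodNonMultiples p id k =
      (N - 1).choose (k / p) * prodNonMultiples p (fun j => p * N - j) k := by
  induction k with
  | zero => simp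
  | succ k ih =>
    by_cases h : p ∣ k + 1
    · obtain ⟨m, hm⟩ := h
      have hm0 : 0 < m := Nat.pos_of_ne_zero (by rintro rfl; omega)
      have hdiv_succ : (k + 1) / p = m := by rw [hm, Nat.mul_div_cancel_left _ hp]
      have hdiv : k / p = m - 1 := by
        have := Nat.succ_div (a := k) (b := p)
        rw [if_pos ⟨m, hm⟩, hdiv_succ] at this
        omega
      have hN := Nat.choose_succ_right_eq (N - 1) (m - 1)
      rw [Nat.sub_add_cancel hm0, show N - 1 - (m - 1) = N - m by omega] at hN
      rw [prodNonMultiples_succ_of_dvd _ ⟨m, hm⟩, prodNonMultiples_succ_of_dvd _ ⟨m, hm⟩,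
        hdiv_succ]
      rw [hdiv] at ih
      apply Nat.eq_of_mul_eq_mul_right hm0
      linear_combination (prodNonMultiples p id k) * choose_succ_mul_of_succ_eq_mul (N := N) hp hm
        + (N - m) * ih - (prodNonMultiples p (fun j => p * N - j) k) * hN
    · have hdiv : (k + 1) / p = k / p := by rw [Nat.succ_div, if_neg h, add_zero]
      have hstep := Nat.choose_succ_right_eq (p * N - 1) k
      rw [show p * N - 1 - k = p * N - (k + 1) by omega] at hstep
      rw [prodNonMultiples_succ_of_not_dvd _ h, prodNonMultiples_succ_of_not_dvd _ h, hdiv, id]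
      linear_combination (prodNonMultiples p id k) * hstep + (p * N - (k + 1)) * ih

lemma not_dvd_prodNonMultiples_id {p : ℕ} (hp : p.Prime) (k : ℕ) :
    ¬ p ∣ prodNonMultiples p id k := by
  rw [prodNonMultiples, hp.prime.dvd_finsetProd_iff]
  rintro ⟨j, -, hj⟩
  split_ifs at hj with h
  exacts [hp.not_dvd_one hj, h hj]

theorem cast_choose_mul_sub_one {p N k : ℕ} (hp : p.Prime) (hN : p ∣ N) (hk : k ≤ p * N) :
    ((p * N - 1).choose k : ZMod (p ^ 2)) = (-1) ^ (k - k / p) * (N - 1).choose (k / p) := by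
  have hpN : ((p * N : ℕ) : ZMod (p ^ 2)) = 0 := by
    rw [ZMod.natCast_eq_zero_iff, sq]
    exact mul_dvd_mul_left p hN
  have hunit : IsUnit (prodNonMultiples p id k : ZMod (p ^ 2)) :=
    (ZMod.isUnit_natCast_iff_not_dvd_pow hp two_pos).mpr (not_dvd_prodNonMultiples_id hp k)
  have hcast := congrArg (Nat.cast : ℕ → ZMod (p ^ 2))
    (choose_mul_sub_one_mul_prodNonMultiples hp.pos N k)
  rw [Nat.cast_mul, Nat.cast_mul, cast_prodNonMultiples_sub hpN hk] at hcast
  apply hunit.mul_right_cancel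
  rw [hcast]
  ring

theorem cast_choose_mul_sub_one_mul {p N m : ℕ} (hp : p.Prime) (hp2 : p ≠ 2) (hN : p ∣ N)
    (hm : m ≤ N) :
    ((p * N - 1).choose (p * m) : ZMod (p ^ 2)) = (N - 1).choose m := by
  have heven : Even (p * m - m) := by
    rw [← Nat.sub_one_mul]
    exact (Nat.Odd.sub_odd (hp.odd_of_ne_two hp2) odd_one).mul_right m
  rw [cast_choose_mul_sub_one hp hN (Nat.mul_le_mul_left p hm), Nat.mul_div_cancel_left _ hp.pos,
    heven.neg_one_pow, one_mul]

theorem cast_choose_pow_sub_one {p : ℕ} (hp : p.Prime) (hp2 : p ≠ 2) (j : ℕ) :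
    ((p ^ (j + 2) - 1).choose (p ^ (j + 1) + p ^ j) : ZMod (p ^ 2)) = 1 - p := by
  induction j with
  | zero =>
    have hdiv : (p + 1) / p = 1 := Nat.div_eq_of_lt_le (by omega) (by have := hp.two_le; omega)
    have hbase : (p ^ (0 + 2) - 1).choose (p ^ (0 + 1) + p ^ 0) = (p * p - 1).choose (p + 1) := by
      ring_nf
    rw [hbase, cast_choose_mul_sub_one (k := p + 1) hp dvd_rfl (by nlinarith [hp.two_le]),
      hdiv, Nat.add_sub_cancel, (hp.odd_of_ne_two hp2).neg_one_pow, Nat.choose_one_right,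
      Nat.cast_sub hp.one_le]
    push_cast
    ring
  | succ j ih =>
    have hk : p ^ (j + 1 + 1) + p ^ (j + 1) = p * (p ^ (j + 1) + p ^ j) := by ring
    have hle : p ^ (j + 1) + p ^ j ≤ p ^ (j + 2) := by
      have := Nat.pow_le_pow_right hp.pos (show j ≤ j + 1 by omega)
      rw [pow_succ p (j + 1)]
      linarith [Nat.mul_le_mul_left (p ^ (j + 1)) hp.two_le]
    rw [show j + 1 + 2 = 1 + (j + 2) by ring, pow_add, pow_one, hk,
      cast_choose_mul_sub_one_mul hp hp2 (dvd_pow_self p (by omega)) hle, ih]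

theorem stmt_13 (p i : ℕ) (hp : p.Prime) (hp3 : 3 < p) (hi : 2 ≤ i) :
    ((p ^ i - 1).choose (p ^ (i - 1) + p ^ (i - 2)) : ZMod (p ^ 2)) =
      1 - (p : ZMod (p ^ 2)) := by
  obtain ⟨j, rfl⟩ : ∃ j, i = j + 2 := ⟨i - 2, by omega⟩
  simpa using cast_choose_pow_sub_one hp (by omega) j
end

section
/- For every prime p > 3, the harmonic sum 1 + 1/2 + ⋯ + 1/(p−1), viewed as a sum of inverses in ℤ/p², is congruent to 0 modulo p². -/
/-! Pair `k` with `p - k`: as `p ^ 2 = 0` in `ZMod (p ^ 2)`, `(p - k)⁻¹ = -k⁻¹ - p k⁻²`, so twice the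
harmonic sum is `-p ∑ k⁻²`, and it suffices that `∑ k⁻² ≡ 0 [MOD p]`. Since `x ↦ x⁻¹` permutes
`ZMod p`, that sum is `∑ x : ZMod p, x ^ 2`, which vanishes because `2 < p - 1`. -/

open Finset

namespace ZMod

theorem castHom_inv_of_isUnit {m n : ℕ} (h : m ∣ n) {a : ZMod n} (ha : IsUnit a) :
    castHom h (ZMod m) a⁻¹ = (castHom h (ZMod m) a)⁻¹ :=
  (ZMod.inv_eq_of_mul_eq_one _ _ _ (by rw [← map_mul, mul_inv_of_unit a ha, map_one])).symm

theorem natCast_mul_eq_zero_iff_castHom {n : ℕ} [NeZero n] (x : ZMod (n ^ 2)) :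
    (n : ZMod (n ^ 2)) * x = 0 ↔ castHom (dvd_pow_self n two_ne_zero) (ZMod n) x = 0 := by
  conv_lhs => rw [← natCast_zmod_val x, ← Nat.cast_mul]
  rw [castHom_apply, cast_eq_val, natCast_eq_zero_iff, natCast_eq_zero_iff]
  have h := Nat.mul_dvd_mul_iff_left (NeZero.pos n) (b := n) (c := x.val)
  rwa [← pow_two] at h

theorem inv_sub_of_sq_eq_zero {n : ℕ} {a ε : ZMod n} (ha : IsUnit a) (hε : ε ^ 2 = 0) :
    (ε - a)⁻¹ = -a⁻¹ - ε * a⁻¹ ^ 2 :=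
  ZMod.inv_eq_of_mul_eq_one _ _ _ <| by
    linear_combination (1 + ε * a⁻¹) * mul_inv_of_unit a ha - a⁻¹ ^ 2 * hε

theorem sum_Ico_one_natCast {M : Type*} [AddCommMonoid M] (n : ℕ) [NeZero n]
    (f : ZMod n → M) (hf : f 0 = 0) : ∑ k ∈ Ico 1 n, f k = ∑ x, f x := by
  rw [← sum_erase univ hf]
  refine sum_nbij' (↑) val (fun k hk => ?_) (fun x hx => ?_) (fun k hk => ?_)
    (fun x _ => natCast_zmod_val x) (fun _ _ => rfl)
  · rw [Finset.mem_Ico] at hk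
    rw [mem_erase, Ne, natCast_eq_zero_iff]
    exact ⟨Nat.not_dvd_of_pos_of_lt hk.1 hk.2, mem_univ _⟩
  · rw [mem_erase] at hx
    exact Finset.mem_Ico.2 ⟨Nat.one_le_iff_ne_zero.2 ((val_ne_zero x).2 hx.1), val_lt x⟩
  · exact val_cast_of_lt (Finset.mem_Ico.1 hk).2

end ZMod

theorem FiniteField.sum_inv_pow_lt_card_sub_one {K : Type*} [Field K] [Fintype K] (i : ℕ)
    (h : i < Fintype.card K - 1) : ∑ x : K, x⁻¹ ^ i = 0 := by
  rw [← FiniteField.sum_pow_lt_card_sub_one K i h]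
  exact Equiv.sum_comp (Equiv.inv K) (· ^ i)

section Wolstenholme

variable {p : ℕ} [Fact p.Prime]

theorem isUnit_natCast_of_mem_Ico {k : ℕ} (hk : k ∈ Ico 1 p) : IsUnit (k : ZMod (p ^ 2)) :=
  (ZMod.isUnit_natCast_iff_not_dvd_pow Fact.out two_pos).2 <|
    Nat.not_dvd_of_pos_of_lt (mem_Ico.1 hk).1 (mem_Ico.1 hk).2

theorem sum_Ico_inv_sq_eq_zero (hp : 3 < p) : ∑ k ∈ Ico 1 p, (k : ZMod p)⁻¹ ^ 2 = 0 := by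
  rw [ZMod.sum_Ico_one_natCast p (·⁻¹ ^ 2) (by simp)]
  exact FiniteField.sum_inv_pow_lt_card_sub_one 2 (by rw [ZMod.card]; omega)

theorem natCast_mul_sum_Ico_inv_sq_eq_zero (hp : 3 < p) :
    (p : ZMod (p ^ 2)) * ∑ k ∈ Ico 1 p, (k : ZMod (p ^ 2))⁻¹ ^ 2 = 0 := by
  rw [ZMod.natCast_mul_eq_zero_iff_castHom, map_sum, ← sum_Ico_inv_sq_eq_zero hp]
  refine sum_congr rfl fun k hk => ?_
  rw [map_pow, ZMod.castHom_inv_of_isUnit _ (isUnit_natCast_of_mem_Ico hk), map_natCast]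

theorem two_mul_sum_Ico_inv :
    2 * ∑ k ∈ Ico 1 p, (k : ZMod (p ^ 2))⁻¹ =
      -((p : ZMod (p ^ 2)) * ∑ k ∈ Ico 1 p, (k : ZMod (p ^ 2))⁻¹ ^ 2) := by
  have hreflect : ∑ k ∈ Ico 1 p, ((p - k : ℕ) : ZMod (p ^ 2))⁻¹ =
      ∑ k ∈ Ico 1 p, (k : ZMod (p ^ 2))⁻¹ := by
    simpa using sum_Ico_reflect (fun k => (k : ZMod (p ^ 2))⁻¹) 1 p.le_succ
  have hp_sq : (p : ZMod (p ^ 2)) ^ 2 = 0 := by rw [← Nat.cast_pow, ZMod.natCast_self]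
  have hterm : ∀ k ∈ Ico 1 p, ((p - k : ℕ) : ZMod (p ^ 2))⁻¹ =
      -(k : ZMod (p ^ 2))⁻¹ - p * (k : ZMod (p ^ 2))⁻¹ ^ 2 := fun k hk => by
    rw [Nat.cast_sub (mem_Ico.1 hk).2.le,
      ZMod.inv_sub_of_sq_eq_zero (isUnit_natCast_of_mem_Ico hk) hp_sq]
  rw [two_mul]
  conv_lhs => enter [1]; rw [← hreflect, sum_congr rfl hterm]
  rw [sum_sub_distrib, sum_neg_distrib, mul_sum]
  ring

end Wolstenholme

theorem stmt_14 (p : ℕ) (hp : p.Prime) (hp3 : 3 < p) :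
    ∑ k ∈ Finset.Icc 1 (p - 1), ((k : ZMod (p ^ 2)))⁻¹ = 0 := by
  have := Fact.mk hp
  have hIcc : Icc 1 (p - 1) = Ico 1 p := by ext; simp only [mem_Icc, mem_Ico]; omega
  have h2 : IsUnit (2 : ZMod (p ^ 2)) := by
    exact_mod_cast (ZMod.isUnit_natCast_iff_not_dvd_pow hp two_pos).2
      fun h => by have := Nat.le_of_dvd two_pos h; omega
  rw [hIcc, ← h2.mul_right_eq_zero, two_mul_sum_Ico_inv,
    natCast_mul_sum_Ico_inv_sq_eq_zero hp3, neg_zero]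
end

section
/- For every prime p > 3, the binomial coefficient C(2p−1, p−1) is congruent to 1 modulo p³ (a form of Wolstenholme's theorem); in particular C(2p, p) ≡ 2 (mod p³). -/
/-!
Let `f(x) = (x + 1)(x + 2) ⋯ (x + p - 1)`. Then `f(p) = (p - 1)! * C(2p - 1, p - 1)` and, since
`p - 1` is even, `f(-p) = f(0) = (p - 1)!`. In `f(p) + f(-p) - 2 f(0)` the odd coefficients cancel,
so it is `2 a₂ p²` modulo `p⁴`. Modulo `p` we have `x f(x) = x (x + 1) ⋯ (x + p - 1) = x^p - x`,
so `f ≡ x^(p-1) - 1` and `p ∣ a₂` as soon as `p - 1 ≠ 2`. Hence `p³ ∣ (p - 1)! (C(2p - 1, p - 1) - 1)`.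
-/

open Polynomial Nat

theorem Polynomial.pow_three_dvd_eval_add_eval_neg {R : Type*} [CommRing R] (f : R[X]) {x : R}
    (h : x ∣ f.coeff 2) : x ^ 3 ∣ f.eval x + f.eval (-x) - 2 * f.coeff 0 := by
  obtain ⟨c, hc⟩ := h
  set g := f.divX.divX.divX
  have hf : f = C (f.coeff 0) + X * (C (f.coeff 1) + X * (C (f.coeff 2) + X * g)) := by
    conv_lhs => rw [← X_mul_divX_add f, ← X_mul_divX_add f.divX, ← X_mul_divX_add f.divX.divX]
    simp only [coeff_divX, g]
    ring
  refine ⟨2 * c + g.eval x - g.eval (-x), ?_⟩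
  rw [hf]
  simp only [eval_add, eval_mul, eval_C, eval_X, coeff_add, coeff_C_zero, coeff_X_mul_zero, hc]
  ring

theorem ascPochhammer_eval_natCast_add_two (R : Type*) [CommRing R] (n : ℕ) :
    (ascPochhammer R n).eval ((n + 2 : ℕ) : R) = n ! * (2 * n + 1).choose n := by
  rw [← Nat.cast_ascFactorial, Nat.ascFactorial_eq_factorial_mul_choose, Nat.cast_mul,
    show n + 1 + n = 2 * n + 1 by ring]

theorem ascPochhammer_eval_neg_natCast_self (R : Type*) [CommRing R] (n : ℕ) :
    (ascPochhammer R n).eval (-(n : R)) = (-1) ^ n * n ! := by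
  rw [ascPochhammer_eval_neg_eq_descPochhammer, descPochhammer_eval_eq_descFactorial,
    Nat.descFactorial_self]

theorem ZMod.ascPochhammer_eq_X_pow_sub_X (p : ℕ) [hp : Fact p.Prime] :
    ascPochhammer (ZMod p) p = X ^ p - X := by
  have hmonic : (X ^ p - X : (ZMod p)[X]).Monic :=
    monic_X_pow_sub (by rw [degree_X]; exact_mod_cast hp.out.one_lt)
  have hdeg : (ascPochhammer (ZMod p) p).degree = p := by
    rw [degree_eq_natDegree (monic_ascPochhammer _ _).ne_zero, ascPochhammer_natDegree]
  refine eq_of_degree_le_of_eval_index_eq (s := Finset.univ) (v := id) (Set.injOn_id _) ?_ ?_ ?_ ?_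
  · simp [hdeg]
  · rw [hdeg, degree_eq_natDegree hmonic.ne_zero,
      FiniteField.X_pow_card_sub_X_natDegree_eq _ hp.out.one_lt]
  · rw [(monic_ascPochhammer _ _).leadingCoeff, hmonic.leadingCoeff]
  · intro a _
    have := ascPochhammer_eval_neg_coe_nat_of_lt (R := ZMod p) (ZMod.val_lt (-a))
    simp only [ZMod.natCast_val, ZMod.cast_id', id, neg_neg] at this
    simp [this, ZMod.pow_card]

theorem ZMod.ascPochhammer_comp_X_add_one (p : ℕ) [hp : Fact p.Prime] :
    (ascPochhammer (ZMod p) (p - 1)).comp (X + 1) = X ^ (p - 1) - 1 := by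
  obtain ⟨n, rfl⟩ : ∃ n, p = n + 1 := Nat.exists_eq_add_one.mpr hp.out.pos
  refine mul_left_cancel₀ (X_ne_zero (R := ZMod (n + 1))) ?_
  rw [Nat.add_sub_cancel, ← ascPochhammer_succ_left, ZMod.ascPochhammer_eq_X_pow_sub_X]
  ring

theorem prime_dvd_coeff_ascPochhammer_comp_X_add_one {p : ℕ} (hp : p.Prime) {k : ℕ} (hk0 : k ≠ 0)
    (hk : k ≠ p - 1) : (p : ℤ) ∣ ((ascPochhammer ℤ (p - 1)).comp (X + 1)).coeff k := by
  have := Fact.mk hp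
  rw [← ZMod.intCast_zmod_eq_zero_iff_dvd, ← eq_intCast (Int.castRingHom (ZMod p)), ← coeff_map,
    Polynomial.map_comp, ascPochhammer_map, Polynomial.map_add, Polynomial.map_X,
    Polynomial.map_one, ZMod.ascPochhammer_comp_X_add_one]
  simp [coeff_X_pow, coeff_one, hk, hk0]

theorem Nat.Prime.pow_three_dvd_choose_sub_one {p : ℕ} (hp : p.Prime) (hp3 : 3 < p) :
    (p : ℤ) ^ 3 ∣ ((2 * p - 1).choose (p - 1) : ℤ) - 1 := by
  obtain ⟨n, rfl⟩ : ∃ n, p = n + 1 := Nat.exists_eq_add_one.mpr hp.pos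
  have hcoeff := prime_dvd_coeff_ascPochhammer_comp_X_add_one hp two_ne_zero (by omega)
  rw [Nat.add_sub_cancel] at hcoeff ⊢
  rw [show 2 * (n + 1) - 1 = 2 * n + 1 by omega]
  set f := (ascPochhammer ℤ n).comp (X + 1)
  have hf : ∀ x, f.eval x = (ascPochhammer ℤ n).eval (x + 1) := by simp [f]
  have hf_pos : f.eval ((n + 1 : ℕ) : ℤ) = n ! * (2 * n + 1).choose n := by
    rw [hf, ← ascPochhammer_eval_natCast_add_two]
    norm_cast
  have hf_neg : f.eval (-((n + 1 : ℕ) : ℤ)) = n ! := by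
    have hn : Even n := by simpa [Nat.odd_add_one] using hp.odd_of_ne_two (by omega)
    rw [hf, show -((n + 1 : ℕ) : ℤ) + 1 = -n by push_cast; ring,
      ascPochhammer_eval_neg_natCast_self, hn.neg_one_pow, one_mul]
  have hf_zero : f.coeff 0 = n ! := by
    rw [coeff_zero_eq_eval_zero, hf, zero_add, ascPochhammer_eval_one]
  have hdvd : ((n + 1 : ℕ) : ℤ) ^ 3 ∣ n ! * (((2 * n + 1).choose n : ℤ) - 1) := by
    have := f.pow_three_dvd_eval_add_eval_neg hcoeff
    rw [hf_pos, hf_neg, hf_zero] at this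
    exact this.trans (dvd_of_eq (by ring))
  have hcop : IsCoprime ((n + 1 : ℕ) : ℤ) (n ! : ℤ) :=
    Nat.isCoprime_iff_coprime.mpr (hp.coprime_iff_not_dvd.mpr (by rw [hp.dvd_factorial]; omega))
  exact hcop.pow_left.dvd_of_dvd_mul_left hdvd

theorem Nat.choose_two_mul_eq_two_mul_choose {n : ℕ} (hn : 0 < n) :
    (2 * n).choose n = 2 * (2 * n - 1).choose (n - 1) := by
  obtain ⟨m, rfl⟩ : ∃ m, n = m + 1 := Nat.exists_eq_add_one.mpr hn
  rw [show 2 * (m + 1) = m + 1 + m + 1 by ring, Nat.choose_succ_succ', Nat.choose_symm_add,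
    Nat.add_sub_cancel, Nat.add_sub_cancel, two_mul]

theorem stmt_15 (p : ℕ) (hp : p.Prime) (hp3 : 3 < p) :
    (((2 * p - 1).choose (p - 1) : ZMod (p ^ 3)) = 1) ∧
      (((2 * p).choose p : ZMod (p ^ 3)) = 2) := by
  have hwol : (((2 * p - 1).choose (p - 1) : ℤ) : ZMod (p ^ 3)) = ((1 : ℤ) : ZMod (p ^ 3)) := by
    rw [eq_comm, ZMod.intCast_eq_intCast_iff_dvd_sub]
    exact_mod_cast hp.pow_three_dvd_choose_sub_one hp3
  push_cast at hwol
  refine ⟨hwol, ?_⟩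
  rw [Nat.choose_two_mul_eq_two_mul_choose hp.pos, Nat.cast_mul, hwol]
  norm_num
end

section
/- For every prime p > 3, (−1)^{(p−1)/2}·C(p−1, (p−1)/2) ≡ 4^{p−1} (mod p²). -/
/-!
Write `p = 2n + 1` and `H = 1 + 1/2 + ⋯ + 1/n`. Since `p² = 0` in `ZMod (p ^ 2)`, expanding to
first order in `p` gives `∏_{k=1}^n (p - c k) = (-c)ⁿ n! (1 - p H / c)`. For `c = 1` the
product is `n! C(2n, n)`, so `(-1)ⁿ C(2n, n) = 1 - p H`. For `c = 2` it is the product of the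
odd factors of `(2n)! = 2ⁿ n! ∏_{k=1}^n (p - 2k)`; comparing with `(2n)! = n!² C(2n, n)` yields
Eisenstein's `2^(p-1) = 1 - p H / 2`, whose square is `4^(p-1) = 1 - p H`.
-/

open Finset Nat

section SquareZero

variable {R ι : Type*} [CommRing R] {ε : R}

theorem prod_one_add_mul_of_sq_eq_zero (hε : ε ^ 2 = 0) (s : Finset ι) (f : ι → R) :
    ∏ i ∈ s, (1 + ε * f i) = 1 + ε * ∑ i ∈ s, f i := by
  classical
  induction s using Finset.induction with
  | empty => simp
  | insert a s ha ih =>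
    rw [prod_insert ha, ih, sum_insert ha]
    linear_combination (f a * ∑ i ∈ s, f i) * hε

theorem prod_add_of_sq_eq_zero (hε : ε ^ 2 = 0) (s : Finset ι) {a b : ι → R}
    (hab : ∀ i ∈ s, a i * b i = 1) :
    ∏ i ∈ s, (a i + ε) = (∏ i ∈ s, a i) * (1 + ε * ∑ i ∈ s, b i) := by
  have h : ∀ i ∈ s, a i + ε = a i * (1 + ε * b i) := fun i hi => by
    linear_combination (-ε) * hab i hi
  rw [prod_congr rfl h, prod_mul_distrib, prod_one_add_mul_of_sq_eq_zero hε]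

end SquareZero

theorem Nat.factorial_two_mul_eq_prod_odd (n : ℕ) :
    (2 * n)! = 2 ^ n * n ! * ∏ k ∈ range n, (2 * n + 1 - 2 * (k + 1)) := by
  induction n with
  | zero => simp
  | succ n ih =>
    have hodd : ∏ k ∈ range (n + 1), (2 * (n + 1) + 1 - 2 * (k + 1))
        = (∏ k ∈ range n, (2 * n + 1 - 2 * (k + 1))) * (2 * n + 1) := by
      rw [prod_range_succ']
      congr 1
      exact prod_congr rfl fun k _ => by omega
    rw [hodd, show 2 * (n + 1) = 2 * n + 1 + 1 by ring, factorial_succ, factorial_succ,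
      ih, factorial_succ]
    ring

theorem ZMod.natCast_self_sq (p : ℕ) : (p : ZMod (p ^ 2)) ^ 2 = 0 := by
  exact_mod_cast ZMod.natCast_self (p ^ 2)

theorem ZMod.two_mul_inv_two {N : ℕ} (hN : Odd N) : (2 : ZMod N) * 2⁻¹ = 1 := by
  exact_mod_cast ZMod.coe_mul_inv_eq_one 2 (Nat.coprime_two_left.2 hN)

/-- `ZMod.inv` inverts only units, so this is the harmonic number `H_n` only when `1, …, n` are
units of `ZMod N`. -/
def zmodHarmonic (N n : ℕ) : ZMod N := ∑ k ∈ range n, ((k + 1 : ℕ) : ZMod N)⁻¹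

theorem Nat.Prime.coprime_pow_of_lt {p k : ℕ} (hp : p.Prime) (hk0 : k ≠ 0) (hkp : k < p)
    (e : ℕ) : k.Coprime (p ^ e) :=
  (Nat.coprime_of_lt_prime hk0 hkp hp).symm.pow_right e

theorem prod_range_natCast_sub_mul_succ {p c n : ℕ} (hp : p.Prime) (hc : 0 < c)
    (hcn : c * n < p) :
    ∏ k ∈ range n, ((p - c * (k + 1) : ℕ) : ZMod (p ^ 2)) =
      (-(c : ZMod (p ^ 2))) ^ n * (n ! : ZMod (p ^ 2)) *
        (1 - (p : ZMod (p ^ 2)) * (c : ZMod (p ^ 2))⁻¹ * zmodHarmonic (p ^ 2) n) := by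
  rcases n.eq_zero_or_pos with rfl | hn
  · simp [zmodHarmonic]
  have hcinv := ZMod.coe_mul_inv_eq_one c (hp.coprime_pow_of_lt hc.ne' (by nlinarith) 2)
  have hkinv : ∀ k ∈ range n,
      ((k + 1 : ℕ) : ZMod (p ^ 2)) * ((k + 1 : ℕ) : ZMod (p ^ 2))⁻¹ = 1 :=
    fun k hk => ZMod.coe_mul_inv_eq_one _ <|
      hp.coprime_pow_of_lt k.succ_ne_zero (by have := mem_range.1 hk; nlinarith) 2
  have hcast : ∀ k ∈ range n, ((p - c * (k + 1) : ℕ) : ZMod (p ^ 2))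
      = -(c * (k + 1 : ℕ) : ZMod (p ^ 2)) + p := fun k hk => by
    rw [Nat.cast_sub (by have := mem_range.1 hk; nlinarith)]
    push_cast; ring
  have hab : ∀ k ∈ range n, -((c : ZMod (p ^ 2)) * (k + 1 : ℕ))
      * -((c : ZMod (p ^ 2))⁻¹ * ((k + 1 : ℕ) : ZMod (p ^ 2))⁻¹) = 1 := fun k hk => by
    linear_combination ((k + 1 : ℕ) * ((k + 1 : ℕ) : ZMod (p ^ 2))⁻¹) * hcinv + hkinv k hk
  rw [prod_congr rfl hcast, prod_add_of_sq_eq_zero (ZMod.natCast_self_sq p) _ hab]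
  simp only [neg_mul_eq_neg_mul, prod_mul_distrib, prod_const, card_range, ← mul_sum,
    zmodHarmonic]
  rw [← Nat.cast_prod, prod_range_add_one_eq_factorial]
  ring

section OddPrime

variable {p n : ℕ}

theorem Nat.Prime.coprime_factorial_pow (hp : p.Prime) (hnp : n < p) (e : ℕ) :
    (n !).Coprime (p ^ e) :=
  ((hp.coprime_iff_not_dvd.2 fun h => by rw [hp.dvd_factorial] at h; omega).symm).pow_right e

theorem factorial_mul_choose_two_mul_eq (hp : p.Prime) (hpn : p = 2 * n + 1) :
    (n ! : ZMod (p ^ 2)) * ((2 * n).choose n : ZMod (p ^ 2))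
      = (-1) ^ n * (n ! : ZMod (p ^ 2)) * (1 - (p : ZMod (p ^ 2)) * zmodHarmonic (p ^ 2) n) := by
  have hprod : n ! * (2 * n).choose n = ∏ k ∈ range n, (p - 1 * (k + 1)) := by
    rw [← descFactorial_eq_factorial_mul_choose, descFactorial_eq_prod_range]
    exact prod_congr rfl fun k _ => by omega
  have h := congrArg (Nat.cast : ℕ → ZMod (p ^ 2)) hprod
  push_cast at h
  rw [h, prod_range_natCast_sub_mul_succ hp one_pos (by omega)]
  simp

theorem neg_one_pow_mul_choose_two_mul_eq (hp : p.Prime) (hpn : p = 2 * n + 1) :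
    (-1 : ZMod (p ^ 2)) ^ n * ((2 * n).choose n : ZMod (p ^ 2))
      = 1 - (p : ZMod (p ^ 2)) * zmodHarmonic (p ^ 2) n := by
  have hunit : IsUnit (n ! : ZMod (p ^ 2)) :=
    (ZMod.isUnit_iff_coprime _ _).2 (hp.coprime_factorial_pow (by omega) 2)
  have hsq : ((-1 : ZMod (p ^ 2)) ^ n) ^ 2 = 1 := by rw [← pow_mul, pow_mul', neg_one_sq, one_pow]
  refine hunit.mul_left_cancel ?_
  linear_combination (-1 : ZMod (p ^ 2)) ^ n * factorial_mul_choose_two_mul_eq hp hpn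
    + (n ! : ZMod (p ^ 2)) * (1 - p * zmodHarmonic (p ^ 2) n) * hsq

theorem two_pow_sub_one_eq_one_sub_zmodHarmonic (hp : p.Prime) (hpn : p = 2 * n + 1) :
    (2 : ZMod (p ^ 2)) ^ (p - 1) = 1 - (p : ZMod (p ^ 2)) * 2⁻¹ * zmodHarmonic (p ^ 2) n := by
  set H := zmodHarmonic (p ^ 2) n
  have hchoose : (((2 * n)! : ℕ) : ZMod (p ^ 2)) = n ! * (n ! * ((2 * n).choose n : ℕ)) := by
    rw [← choose_mul_factorial_mul_factorial (by omega : n ≤ 2 * n),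
      show 2 * n - n = n by omega]
    push_cast; ring
  have hodd : (((2 * n)! : ℕ) : ZMod (p ^ 2))
      = 2 ^ n * n ! * ((-2) ^ n * n ! * (1 - p * 2⁻¹ * H)) := by
    rw [factorial_two_mul_eq_prod_odd, ← hpn]
    push_cast
    rw [prod_range_natCast_sub_mul_succ hp two_pos (by have := hp.two_le; omega)]
    push_cast; rfl
  have hunit : IsUnit ((-1) ^ n * n ! * n ! : ZMod (p ^ 2)) := by
    have h := (ZMod.isUnit_iff_coprime _ _).2 (hp.coprime_factorial_pow (n := n) (by omega) 2)
    exact ((isUnit_one.neg.pow n).mul h).mul h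
  have hsplit : (2 : ZMod (p ^ 2)) ^ (p - 1) * (1 - p * 2⁻¹ * H) = 1 - p * H := by
    refine hunit.mul_left_cancel ?_
    rw [show p - 1 = n + n by omega, pow_add]
    linear_combination hchoose - hodd
      + (n ! : ZMod (p ^ 2)) * factorial_mul_choose_two_mul_eq hp hpn
      - 2 ^ n * (n ! : ZMod (p ^ 2)) ^ 2 * (1 - p * 2⁻¹ * H) * neg_pow (2 : ZMod (p ^ 2)) n
  have h2 : (2 : ZMod (p ^ 2)) * 2⁻¹ = 1 :=
    ZMod.two_mul_inv_two (hpn ▸ odd_two_mul_add_one n).pow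
  linear_combination (1 + p * 2⁻¹ * H) * hsplit + p * H * h2
    + ((2 : ZMod (p ^ 2)) ^ (p - 1) * (2⁻¹ * H) ^ 2 - 2⁻¹ * H ^ 2) * ZMod.natCast_self_sq p

theorem stmt_17 (p : ℕ) (hp : p.Prime) (hp3 : 3 < p) :
    (-1 : ZMod (p ^ 2)) ^ ((p - 1) / 2) * ((p - 1).choose ((p - 1) / 2) : ZMod (p ^ 2)) =
      (4 : ZMod (p ^ 2)) ^ (p - 1) := by
  obtain ⟨n, hpn⟩ := hp.odd_of_ne_two (by omega)
  have hfour : (4 : ZMod (p ^ 2)) ^ (p - 1) = ((2 : ZMod (p ^ 2)) ^ (p - 1)) ^ 2 := by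
    rw [← pow_mul, mul_comm, pow_mul]
    norm_num
  rw [hfour, two_pow_sub_one_eq_one_sub_zmodHarmonic hp hpn, show (p - 1) / 2 = n by omega,
    show p - 1 = 2 * n by omega, neg_one_pow_mul_choose_two_mul_eq hp hpn]
  have h2 : (2 : ZMod (p ^ 2)) * 2⁻¹ = 1 :=
    ZMod.two_mul_inv_two (hpn ▸ odd_two_mul_add_one n).pow
  linear_combination (p : ZMod (p ^ 2)) * zmodHarmonic (p ^ 2) n * h2
    - (2⁻¹ * zmodHarmonic (p ^ 2) n) ^ 2 * ZMod.natCast_self_sq p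
end OddPrime
end
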